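/- arXiv:1612.04112 — 5 statements merged into one kernel-verified Lean document; each statement's English description precedes it below -/
import Mathlib

section
/- Let $H \geq 1$ and let $X$ be an $M \times H$ real matrix and $Y$ an $H \times N$ real matrix, both with non-negative entries. Writing $x_k$ for the $k$-th column of $X$ and $y_k$ for the $k$-th row of $Y$, the squared Frobenius norm of the product satisfies the two-sided bound $\sum_{k=1}^{H} \Big(\sum_{i=1}^{M} x_{ik}^2\Big)\Big(\sum_{j=1}^{N} y_{kj}^2\Big) \;\leq\; \|XY\|^2 \;\leq\; H \sum_{k=1}^{H} \Big(\sum_{i=1}^{M} x_{ik}^2\Big)\Big(\sum_{j=1}^{N} y_{kj}^2\Big).$ -/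
open Finset

/-- For non-negative matrices `X : M × H` and `Y : H × N`, the squared Frobenius
norm of the product `X * Y` is bounded between `∑ₖ (∑ᵢ xᵢₖ²)(∑ⱼ yₖⱼ²)` and
`H` times that quantity. -/
theorem nmf_product_frobenius_bound (M N H : ℕ) (hH : 1 ≤ H)
    (X : Matrix (Fin M) (Fin H) ℝ) (Y : Matrix (Fin H) (Fin N) ℝ)
    (hX : ∀ i k, 0 ≤ X i k) (hY : ∀ k j, 0 ≤ Y k j) :
    (∑ k : Fin H, (∑ i : Fin M, (X i k) ^ 2) * (∑ j : Fin N, (Y k j) ^ 2)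
      ≤ ∑ i : Fin M, ∑ j : Fin N, ((X * Y) i j) ^ 2) ∧
    (∑ i : Fin M, ∑ j : Fin N, ((X * Y) i j) ^ 2
      ≤ (H : ℝ) * ∑ k : Fin H, (∑ i : Fin M, (X i k) ^ 2) * (∑ j : Fin N, (Y k j) ^ 2)) := by
  have key : ∑ k : Fin H, (∑ i : Fin M, (X i k) ^ 2) * (∑ j : Fin N, (Y k j) ^ 2)
      = ∑ i : Fin M, ∑ j : Fin N, ∑ k : Fin H, (X i k * Y k j) ^ 2 := by
    simp_rw [Finset.sum_mul, Finset.mul_sum, mul_pow]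
    rw [Finset.sum_comm]
    exact Finset.sum_congr rfl fun i _ => Finset.sum_comm
  have hmul : ∀ i j, (X * Y) i j = ∑ k : Fin H, X i k * Y k j := fun i j => by
    simp [Matrix.mul_apply]
  constructor
  · rw [key]
    apply Finset.sum_le_sum; intro i _
    apply Finset.sum_le_sum; intro j _
    rw [hmul]
    exact Finset.sum_sq_le_sq_sum_of_nonneg fun k _ =>
      mul_nonneg (hX i k) (hY k j)
  · rw [key, Finset.mul_sum]
    apply Finset.sum_le_sum; intro i _
    rw [Finset.mul_sum]
    apply Finset.sum_le_sum; intro j _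
    rw [hmul]
    have := sq_sum_le_card_mul_sum_sq (s := Finset.univ)
      (f := fun k : Fin H => X i k * Y k j)
    simpa using this
end

section
/- Let $K$ be a compact subset of the strictly positive reals $\mathbb{R}_{>0}$ and let $a, a', b, b' > 0$ be fixed. Then there exists a constant $C > 0$ such that for all $x, x', y, y' \in K$, $(x y - a b)^2 \;\leq\; C\,\big( (x' y - a' b)^2 + (x y' - a b')^2 + (x' y' - a' b')^2 \big).$ -/
set_option maxHeartbeats 1000000



private lemma four_sq_aux (u v w z : ℝ) :
    (u + v + w - z) ^ 2 ≤ 4 * (u ^ 2 + v ^ 2 + w ^ 2 + z ^ 2) := by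
  nlinarith [sq_nonneg (u - v), sq_nonneg (u - w), sq_nonneg (u + z),
    sq_nonneg (v - w), sq_nonneg (v + z), sq_nonneg (w + z)]

/-- Uniform element-wise recursion inequality for rank-one factorization
residuals over a compact subset `K` of the strictly positive reals. -/
theorem residual_recursion_bound (K : Set ℝ) (hK : IsCompact K)
    (hKpos : K ⊆ {t : ℝ | 0 < t}) (a a' b b' : ℝ)
    (ha : 0 < a) (ha' : 0 < a') (hb : 0 < b) (hb' : 0 < b') :
    ∃ C > (0 : ℝ), ∀ x ∈ K, ∀ x' ∈ K, ∀ y ∈ K, ∀ y' ∈ K,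
      (x * y - a * b) ^ 2
        ≤ C * ((x' * y - a' * b) ^ 2 + (x * y' - a * b') ^ 2
            + (x' * y' - a' * b') ^ 2) := by
  rcases K.eq_empty_or_nonempty with hE | hne
  · exact ⟨1, one_pos, fun x hx => by simp [hE] at hx⟩
  obtain ⟨m, hmK, hmin⟩ := hK.exists_isMinOn hne continuousOn_id
  obtain ⟨M, hMK, hmax⟩ := hK.exists_isMaxOn hne continuousOn_id
  have hm : 0 < m := hKpos hmK
  set B : ℝ := M ^ 2 + a' * b with hB
  have hC : (0 : ℝ) <
      4 * (B ^ 2 + (a * b') ^ 2 + (a' * b) ^ 2 + (a * b) ^ 2) / m ^ 4 := by positivity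
  refine ⟨_, hC, ?_⟩
  intro x hx x' hx' y hy y' hy'
  have hmx' : m ≤ x' := hmin hx'
  have hmy' : m ≤ y' := hmin hy'
  have hMx' : x' ≤ M := hmax hx'
  have hMy : y ≤ M := hmax hy
  have hx'pos : 0 < x' := hKpos hx'
  have hypos : 0 < y := hKpos hy
  have hy'pos : 0 < y' := hKpos hy'
  set r1 : ℝ := x' * y - a' * b with hr1def
  set r2 : ℝ := x * y' - a * b' with hr2def
  set r3 : ℝ := x' * y' - a' * b' with hr3def
  have hr1 : r1 ^ 2 ≤ B ^ 2 := by
    have h1 : x' * y ≤ M ^ 2 := by nlinarith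
    have h2 : r1 ≤ B := by rw [hr1def, hB]; nlinarith
    have h3 : -B ≤ r1 := by rw [hr1def, hB]; nlinarith
    nlinarith
  have hs : m ^ 2 ≤ x' * y' := by nlinarith
  have key : x' * y' * (x * y - a * b)
      = r1 * r2 + a * b' * r1 + a' * b * r2 - a * b * r3 := by
    rw [hr1def, hr2def, hr3def]; ring
  clear_value B r1 r2 r3
  rw [div_mul_eq_mul_div, le_div_iff₀ (by positivity)]
  have hs2 : m ^ 4 ≤ (x' * y') ^ 2 := by nlinarith [sq_nonneg m, mul_pos hx'pos hy'pos]
  have h1 : m ^ 4 * (x * y - a * b) ^ 2 ≤ (x' * y' * (x * y - a * b)) ^ 2 := by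
    rw [mul_pow]
    exact mul_le_mul_of_nonneg_right hs2 (sq_nonneg _)
  have h2 : (x' * y' * (x * y - a * b)) ^ 2
      ≤ 4 * ((r1 * r2) ^ 2 + (a * b' * r1) ^ 2 + (a' * b * r2) ^ 2 + (a * b * r3) ^ 2) := by
    rw [key]
    exact four_sq_aux _ _ _ _
  have h3 : (r1 * r2) ^ 2 ≤ B ^ 2 * r2 ^ 2 := by
    have := sq_nonneg r2
    nlinarith
  have h4 : 4 * ((r1 * r2) ^ 2 + (a * b' * r1) ^ 2 + (a' * b * r2) ^ 2 + (a * b * r3) ^ 2)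
      ≤ 4 * (B ^ 2 + (a * b') ^ 2 + (a' * b) ^ 2 + (a * b) ^ 2)
        * (r1 ^ 2 + r2 ^ 2 + r3 ^ 2) := by
    linarith [h3, mul_nonneg (sq_nonneg B) (sq_nonneg r1),
      mul_nonneg (sq_nonneg B) (sq_nonneg r3),
      mul_nonneg (sq_nonneg (a * b')) (sq_nonneg r2),
      mul_nonneg (sq_nonneg (a * b')) (sq_nonneg r3),
      mul_nonneg (sq_nonneg (a' * b)) (sq_nonneg r1),
      mul_nonneg (sq_nonneg (a' * b)) (sq_nonneg r3),
      mul_nonneg (sq_nonneg (a * b)) (sq_nonneg r1),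
      mul_nonneg (sq_nonneg (a * b)) (sq_nonneg r2)]
  linarith
end

section
/- Let $M, N \geq 2$ be integers, let $K$ be a compact subset of $\mathbb{R}_{>0}$, and let $a \in \mathbb{R}_{>0}^M$, $b \in \mathbb{R}_{>0}^N$ be fixed vectors with strictly positive entries. Define $f_{kl} = x_k y_l - a_k b_l$ for $x \in K^M$, $y \in K^N$. Then there exists a constant $C > 0$ such that for all $x \in K^M$ and $y \in K^N$, $f_{MN}^2 \;\leq\; C \Big( \sum_{i=2}^{M} f_{i1}^2 + \sum_{j=2}^{N} f_{1j}^2 + f_{11}^2 \Big).$ -/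
set_option maxHeartbeats 1000000

open Finset

/-- For rank-one factorization residuals `f i j = x i * y j - a i * b j` with
variables ranging in a compact subset `K` of the positive reals, the residual
at the last index pair is uniformly controlled by the residuals in the first
row and first column. (Index `0` plays the role of index `1` in the paper.) -/
theorem last_residual_bound (M N : ℕ) (hM : 2 ≤ M) (hN : 2 ≤ N)
    (K : Set ℝ) (hK : IsCompact K) (hKpos : K ⊆ {t : ℝ | 0 < t})
    (a : Fin M → ℝ) (b : Fin N → ℝ) (ha : ∀ i, 0 < a i) (hb : ∀ j, 0 < b j) :
    ∃ C > (0 : ℝ), ∀ x : Fin M → ℝ, ∀ y : Fin N → ℝ,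
      (∀ i, x i ∈ K) → (∀ j, y j ∈ K) →
      (x ⟨M - 1, by omega⟩ * y ⟨N - 1, by omega⟩
          - a ⟨M - 1, by omega⟩ * b ⟨N - 1, by omega⟩) ^ 2
        ≤ C * ((∑ i ∈ Finset.univ.erase (⟨0, by omega⟩ : Fin M),
                  (x i * y ⟨0, by omega⟩ - a i * b ⟨0, by omega⟩) ^ 2)
            + (∑ j ∈ Finset.univ.erase (⟨0, by omega⟩ : Fin N),
                  (x ⟨0, by omega⟩ * y j - a ⟨0, by omega⟩ * b j) ^ 2)
            + (x ⟨0, by omega⟩ * y ⟨0, by omega⟩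
                - a ⟨0, by omega⟩ * b ⟨0, by omega⟩) ^ 2) := by
  by_cases hKe : K.Nonempty
  case neg =>
    refine ⟨1, one_pos, fun x y hx hy => ?_⟩
    exact absurd ⟨x ⟨0, by omega⟩, hx _⟩ hKe
  -- extremes of K
  have hbdd := hK.bddAbove
  obtain ⟨ε, hεK, hεle⟩ : ∃ ε ∈ K, ∀ t ∈ K, ε ≤ t :=
    ⟨sInf K, hK.sInf_mem hKe, fun t ht => csInf_le hK.bddBelow ht⟩
  obtain ⟨R, hRK, hRle⟩ : ∃ R ∈ K, ∀ t ∈ K, t ≤ R :=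
    ⟨sSup K, hK.sSup_mem hKe, fun t ht => le_csSup hK.bddAbove ht⟩
  have hεpos : 0 < ε := hKpos hεK
  set m : Fin M := ⟨M - 1, by omega⟩
  set n : Fin N := ⟨N - 1, by omega⟩
  set i0 : Fin M := ⟨0, by omega⟩
  set j0 : Fin N := ⟨0, by omega⟩
  set α := a i0 * b n with hα
  set D := R * R + a m * b j0 with hD
  set β := D + a m * b j0 with hβ
  set γ := a m * b n with hγ
  have hαpos : 0 < α := mul_pos (ha _) (hb _)
  have hγpos : 0 < γ := mul_pos (ha _) (hb _)
  have hDpos : 0 < D := by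
    have : 0 < R := hKpos hRK
    have := mul_pos (ha m) (hb j0)
    nlinarith
  have hβpos : 0 < β := by have := mul_pos (ha m) (hb j0); nlinarith
  refine ⟨3 * (α ^ 2 + β ^ 2 + γ ^ 2) / ε ^ 4, by positivity, fun x y hx hy => ?_⟩
  set u := x m * y j0 - a m * b j0 with hu
  set v := x i0 * y n - a i0 * b n with hv
  set w := x i0 * y j0 - a i0 * b j0 with hw
  set F := x m * y n - a m * b n with hF
  set S := (∑ i ∈ Finset.univ.erase i0, (x i * y j0 - a i * b j0) ^ 2)
      + (∑ j ∈ Finset.univ.erase j0, (x i0 * y j - a i0 * b j) ^ 2) + w ^ 2 with hS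
  -- bounds for the variables
  have hxm : ε ≤ x m ∧ x m ≤ R := ⟨hεle _ (hx m), hRle _ (hx m)⟩
  have hx0 : ε ≤ x i0 ∧ x i0 ≤ R := ⟨hεle _ (hx i0), hRle _ (hx i0)⟩
  have hy0 : ε ≤ y j0 ∧ y j0 ≤ R := ⟨hεle _ (hy j0), hRle _ (hy j0)⟩
  have hyn : ε ≤ y n ∧ y n ≤ R := ⟨hεle _ (hy n), hRle _ (hy n)⟩
  -- |u| ≤ D
  have huD : |u| ≤ D := by
    rw [hu, hD]
    have h1 : 0 < x m * y j0 := mul_pos (lt_of_lt_of_le hεpos hxm.1) (lt_of_lt_of_le hεpos hy0.1)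
    have h2 : x m * y j0 ≤ R * R := by nlinarith [hxm.1, hxm.2, hy0.1, hy0.2]
    have h3 := mul_pos (ha m) (hb j0)
    rw [abs_le]; constructor <;> nlinarith
  -- the key algebraic identity
  have hid : F * (x i0 * y j0) = u * v + α * u + (a m * b j0) * v - γ * w := by
    rw [hF, hu, hv, hw, hα, hγ]; ring
  have hx0y0 : ε ^ 2 ≤ x i0 * y j0 := by nlinarith [hx0.1, hy0.1]
  have h1 : |F| * ε ^ 2 ≤ α * |u| + β * |v| + γ * |w| := by
    have step1 : |F| * ε ^ 2 ≤ |F| * (x i0 * y j0) :=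
      mul_le_mul_of_nonneg_left hx0y0 (abs_nonneg _)
    have step2 : |F| * (x i0 * y j0) = |F * (x i0 * y j0)| := by
      rw [abs_mul, abs_of_pos (lt_of_lt_of_le (by positivity) hx0y0)]
    have step3 : |F * (x i0 * y j0)| ≤ |u| * |v| + α * |u| + (a m * b j0) * |v| + γ * |w| := by
      rw [hid]
      calc |u * v + α * u + (a m * b j0) * v - γ * w|
          ≤ |u * v + α * u + (a m * b j0) * v| + |γ * w| := abs_sub _ _
        _ ≤ |u * v + α * u| + |(a m * b j0) * v| + |γ * w| := by
            gcongr ?_ + _; exact abs_add_le _ _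
        _ ≤ |u * v| + |α * u| + |(a m * b j0) * v| + |γ * w| := by
            gcongr ?_ + _ + _; exact abs_add_le _ _
        _ = |u| * |v| + α * |u| + (a m * b j0) * |v| + γ * |w| := by
            rw [abs_mul u v, abs_mul α u, abs_mul (a m * b j0) v, abs_mul γ w,
              abs_of_pos hαpos, abs_of_pos (mul_pos (ha m) (hb j0)), abs_of_pos hγpos]
    have step4 : |u| * |v| ≤ D * |v| := mul_le_mul_of_nonneg_right huD (abs_nonneg _)
    have : |F| * ε ^ 2 ≤ |u| * |v| + α * |u| + (a m * b j0) * |v| + γ * |w| :=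
      le_trans step1 (step2 ▸ step3)
    rw [hβ]; nlinarith
  -- each of u², v², w² is at most S
  have hmne : m ≠ i0 := by simp [m, i0, Fin.ext_iff]; omega
  have hnne : n ≠ j0 := by simp [n, j0, Fin.ext_iff]; omega
  have hSu : u ^ 2 ≤ S := by
    have hmem : m ∈ Finset.univ.erase i0 := Finset.mem_erase.mpr ⟨hmne, Finset.mem_univ _⟩
    have h : (x m * y j0 - a m * b j0) ^ 2
        ≤ ∑ i ∈ Finset.univ.erase i0, (x i * y j0 - a i * b j0) ^ 2 :=
      Finset.single_le_sum (f := fun i => (x i * y j0 - a i * b j0) ^ 2)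
        (fun i _ => sq_nonneg _) hmem
    have h2 : (0:ℝ) ≤ ∑ j ∈ Finset.univ.erase j0, (x i0 * y j - a i0 * b j) ^ 2 :=
      Finset.sum_nonneg fun _ _ => sq_nonneg _
    have h3 := sq_nonneg w
    rw [hS]; rw [hu]; linarith
  have hSv : v ^ 2 ≤ S := by
    have hmem : n ∈ Finset.univ.erase j0 := Finset.mem_erase.mpr ⟨hnne, Finset.mem_univ _⟩
    have h : (x i0 * y n - a i0 * b n) ^ 2
        ≤ ∑ j ∈ Finset.univ.erase j0, (x i0 * y j - a i0 * b j) ^ 2 :=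
      Finset.single_le_sum (f := fun j => (x i0 * y j - a i0 * b j) ^ 2)
        (fun j _ => sq_nonneg _) hmem
    have h2 : (0:ℝ) ≤ ∑ i ∈ Finset.univ.erase i0, (x i * y j0 - a i * b j0) ^ 2 :=
      Finset.sum_nonneg fun _ _ => sq_nonneg _
    have h3 := sq_nonneg w
    rw [hS]; rw [hv]; linarith
  have hSw : w ^ 2 ≤ S := by
    have h2 : (0:ℝ) ≤ ∑ i ∈ Finset.univ.erase i0, (x i * y j0 - a i * b j0) ^ 2 :=
      Finset.sum_nonneg fun _ _ => sq_nonneg _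
    have h3 : (0:ℝ) ≤ ∑ j ∈ Finset.univ.erase j0, (x i0 * y j - a i0 * b j) ^ 2 :=
      Finset.sum_nonneg fun _ _ => sq_nonneg _
    rw [hS]; linarith
  -- combine
  have h2 : (|F| * ε ^ 2) ^ 2 ≤ (α * |u| + β * |v| + γ * |w|) ^ 2 :=
    pow_le_pow_left₀ (by positivity) h1 2
  have h3 : (α * |u| + β * |v| + γ * |w|) ^ 2
      ≤ 3 * (α ^ 2 * u ^ 2 + β ^ 2 * v ^ 2 + γ ^ 2 * w ^ 2) := by
    nlinarith [sq_nonneg (α * |u| - β * |v|), sq_nonneg (α * |u| - γ * |w|),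
      sq_nonneg (β * |v| - γ * |w|), sq_abs u, sq_abs v, sq_abs w]
  have h4 : 3 * (α ^ 2 * u ^ 2 + β ^ 2 * v ^ 2 + γ ^ 2 * w ^ 2)
      ≤ 3 * (α ^ 2 + β ^ 2 + γ ^ 2) * S := by
    nlinarith [sq_nonneg α, sq_nonneg β, sq_nonneg γ, hSu, hSv, hSw]
  have h5 : F ^ 2 * ε ^ 4 ≤ 3 * (α ^ 2 + β ^ 2 + γ ^ 2) * S := by
    have : (|F| * ε ^ 2) ^ 2 = F ^ 2 * ε ^ 4 := by rw [mul_pow, sq_abs]; ring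
    linarith [this ▸ h2]
  rw [div_mul_eq_mul_div, le_div_iff₀ (by positivity : (0:ℝ) < ε ^ 4)]
  linarith
end

section
/- Let $H \geq H_0 \geq 0$ be integers with $H \geq 1$. Let $X$ be a real $M \times H$ matrix with columns $x_1, \ldots, x_H$, $Y$ a real $H \times N$ matrix with rows $y_1, \ldots, y_H$, $A$ a real $M \times H_0$ matrix with columns $a_1, \ldots, a_{H_0}$, and $B$ a real $H_0 \times N$ matrix with rows $b_1, \ldots, b_{H_0}$. Define $f_{ij}^k = x_{ik} y_{kj} - a_{ik} b_{kj}$ for $k \leq H_0$ and $f_{ij}^k = x_{ik} y_{kj}$ for $H_0 < k \leq H$. If $f_{ij}^k \geq 0$ for all $i, j, k$, then $\sum_{k=1}^{H_0} \big\| x_k y_k^T - a_k b_k^T \big\|^2 + \sum_{k=H_0+1}^{H} \big\| x_k y_k^T \big\|^2 \;\leq\; \|XY - AB\|^2.$ -/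
open Finset

/-- If all individual factorization residuals
`fᵢⱼᵏ = xᵢₖ yₖⱼ - aᵢₖ bₖⱼ` (for `k ≤ H₀`) and `fᵢⱼᵏ = xᵢₖ yₖⱼ` (for `H₀ < k ≤ H`)
are non-negative, then the sum of squared rank-one residual norms is bounded
above by the squared Frobenius norm of `XY - AB`. -/
theorem rank_one_sum_le_frobenius_of_nonneg (M N H H₀ : ℕ)
    (hH₀ : H₀ ≤ H) (hH : 1 ≤ H)
    (X : Matrix (Fin M) (Fin H) ℝ) (Y : Matrix (Fin H) (Fin N) ℝ)
    (A : Matrix (Fin M) (Fin H₀) ℝ) (B : Matrix (Fin H₀) (Fin N) ℝ)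
    (hf₁ : ∀ (i : Fin M) (j : Fin N) (k : Fin H) (hk : (k : ℕ) < H₀),
      0 ≤ X i k * Y k j - A i ⟨(k : ℕ), hk⟩ * B ⟨(k : ℕ), hk⟩ j)
    (hf₂ : ∀ (i : Fin M) (j : Fin N) (k : Fin H), H₀ ≤ (k : ℕ) →
      0 ≤ X i k * Y k j) :
    (∑ k : Fin H₀, ∑ i : Fin M, ∑ j : Fin N,
        (X i (Fin.castLE hH₀ k) * Y (Fin.castLE hH₀ k) j - A i k * B k j) ^ 2)
      + (∑ k ∈ Finset.univ.filter (fun k : Fin H => H₀ ≤ (k : ℕ)),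
          ∑ i : Fin M, ∑ j : Fin N, (X i k * Y k j) ^ 2)
      ≤ ∑ i : Fin M, ∑ j : Fin N, ((X * Y) i j - (A * B) i j) ^ 2 := by
  set f : Fin M → Fin N → Fin H → ℝ := fun i j k =>
    if h : (k : ℕ) < H₀ then X i k * Y k j - A i ⟨(k : ℕ), h⟩ * B ⟨(k : ℕ), h⟩ j
    else X i k * Y k j with hfdef
  have hnonneg : ∀ i j k, 0 ≤ f i j k := by
    intro i j k
    simp only [hfdef]
    split
    · exact hf₁ i j k ‹_›
    · exact hf₂ i j k (le_of_not_gt ‹_›)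
  -- reindexing: sum over Fin H₀ equals sum over filter (k < H₀)
  have hreindex : ∀ (g : Fin H → ℝ) (g' : Fin H₀ → ℝ),
      (∀ (k : Fin H) (hk : (k : ℕ) < H₀), g k = g' ⟨(k : ℕ), hk⟩) →
      ∑ k ∈ Finset.univ.filter (fun k : Fin H => (k : ℕ) < H₀), g k
        = ∑ k : Fin H₀, g' k := by
    intro g g' hgg'
    refine Finset.sum_bij'
      (fun k hk => (⟨(k : ℕ), (Finset.mem_filter.mp hk).2⟩ : Fin H₀))
      (fun k _ => Fin.castLE hH₀ k) (fun _ _ => Finset.mem_univ _)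
      (fun k _ => Finset.mem_filter.mpr ⟨Finset.mem_univ _, k.2⟩)
      (fun k hk => rfl) (fun k hk => rfl) ?_
    intro k hk
    exact hgg' k (Finset.mem_filter.mp hk).2
  -- rewrite RHS entries as squares of sums of f
  have hentry : ∀ i j, (X * Y) i j - (A * B) i j = ∑ k, f i j k := by
    intro i j
    have hsplit : (∑ k, f i j k)
        = ∑ k ∈ Finset.univ.filter (fun k : Fin H => (k : ℕ) < H₀), f i j k
          + ∑ k ∈ Finset.univ.filter (fun k : Fin H => ¬ (k : ℕ) < H₀), f i j k :=
      (Finset.sum_filter_add_sum_filter_not _ _ _).symm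
    have h1 : ∑ k ∈ Finset.univ.filter (fun k : Fin H => (k : ℕ) < H₀), f i j k
        = ∑ k : Fin H₀, (X i (Fin.castLE hH₀ k) * Y (Fin.castLE hH₀ k) j - A i k * B k j) := by
      refine hreindex _ _ ?_
      intro k hk
      simp only [hfdef, dif_pos hk]
      congr
    have h2 : ∑ k ∈ Finset.univ.filter (fun k : Fin H => ¬ (k : ℕ) < H₀), f i j k
        = ∑ k ∈ Finset.univ.filter (fun k : Fin H => ¬ (k : ℕ) < H₀), X i k * Y k j := by
      refine Finset.sum_congr rfl ?_
      intro k hk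
      simp only [hfdef, dif_neg (Finset.mem_filter.mp hk).2]
    rw [hsplit, h1, h2, Finset.sum_sub_distrib]
    have h3 : (X * Y) i j = ∑ k, X i k * Y k j := by
      simp [Matrix.mul_apply]
    have h4 : (A * B) i j = ∑ k, A i k * B k j := by
      simp [Matrix.mul_apply]
    rw [h3, h4]
    have h5 : (∑ k : Fin H, X i k * Y k j)
        = ∑ k : Fin H₀, X i (Fin.castLE hH₀ k) * Y (Fin.castLE hH₀ k) j
          + ∑ k ∈ Finset.univ.filter (fun k : Fin H => ¬ (k : ℕ) < H₀), X i k * Y k j := by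
      rw [← Finset.sum_filter_add_sum_filter_not Finset.univ (fun k : Fin H => (k : ℕ) < H₀)]
      congr 1
      exact hreindex _ _ (fun k hk => rfl)
    rw [h5]
    ring
  -- pointwise inequality
  have key : ∀ i j, (∑ k, f i j k ^ 2) ≤ ((X * Y) i j - (A * B) i j) ^ 2 := by
    intro i j
    rw [hentry i j]
    exact Finset.sum_sq_le_sq_sum_of_nonneg (fun k _ => hnonneg i j k)
  -- rewrite LHS as ∑ i j k, f² and conclude
  have hLHS : (∑ k : Fin H₀, ∑ i : Fin M, ∑ j : Fin N,
        (X i (Fin.castLE hH₀ k) * Y (Fin.castLE hH₀ k) j - A i k * B k j) ^ 2)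
      + (∑ k ∈ Finset.univ.filter (fun k : Fin H => H₀ ≤ (k : ℕ)),
          ∑ i : Fin M, ∑ j : Fin N, (X i k * Y k j) ^ 2)
      = ∑ i : Fin M, ∑ j : Fin N, ∑ k : Fin H, f i j k ^ 2 := by
    have e1 : (∑ k : Fin H₀, ∑ i : Fin M, ∑ j : Fin N,
          (X i (Fin.castLE hH₀ k) * Y (Fin.castLE hH₀ k) j - A i k * B k j) ^ 2)
        = ∑ k ∈ Finset.univ.filter (fun k : Fin H => (k : ℕ) < H₀),
            ∑ i : Fin M, ∑ j : Fin N, f i j k ^ 2 := by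
      refine (hreindex _ _ ?_).symm
      intro k hk
      refine Finset.sum_congr rfl fun i _ => Finset.sum_congr rfl fun j _ => ?_
      simp only [hfdef, dif_pos hk]
      congr
    have e2 : (∑ k ∈ Finset.univ.filter (fun k : Fin H => H₀ ≤ (k : ℕ)),
          ∑ i : Fin M, ∑ j : Fin N, (X i k * Y k j) ^ 2)
        = ∑ k ∈ Finset.univ.filter (fun k : Fin H => ¬ (k : ℕ) < H₀),
            ∑ i : Fin M, ∑ j : Fin N, f i j k ^ 2 := by
      rw [show Finset.univ.filter (fun k : Fin H => H₀ ≤ (k : ℕ))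
          = Finset.univ.filter (fun k : Fin H => ¬ (k : ℕ) < H₀) by
        ext k; simp [not_lt]]
      refine Finset.sum_congr rfl fun k hk => ?_
      refine Finset.sum_congr rfl fun i _ => Finset.sum_congr rfl fun j _ => ?_
      simp only [hfdef, dif_neg (Finset.mem_filter.mp hk).2]
    rw [e1, e2, Finset.sum_filter_add_sum_filter_not]
    rw [Finset.sum_comm]
    exact Finset.sum_congr rfl fun i _ => Finset.sum_comm
  rw [hLHS]
  exact Finset.sum_le_sum fun i _ => Finset.sum_le_sum fun j _ => key i j
end

section
/- For all natural numbers $M$, $N$, $H$ such that $M + N + H$ is odd, $\frac{2H(M+N) - (M-N)^2 - H^2 + 1}{8} \;\leq\; \frac{H \cdot \min\{M, N\}}{2}.$ -/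
lemma odd_sq_ge_one (a : ℤ) (h : Odd a) : 1 ≤ a ^ 2 := by
  have ha : a ≠ 0 := by
    rintro rfl; exact (Int.not_odd_iff_even.mpr Even.zero) h
  have : 1 ≤ |a| := Int.one_le_abs ha
  nlinarith [sq_abs a, abs_nonneg a]

/-- The Aoyagi–Watanabe RLCT formula for reduced rank regression with true
rank `0` (odd case) is bounded above by the RLCT `H min{M,N} / 2` of NMF with
zero true matrix. -/
theorem rrr_rlct_le_nmf_rlct_odd (M N H : ℕ) (hodd : Odd (M + N + H)) :
    (2 * (H : ℚ) * ((M : ℚ) + N) - ((M : ℚ) - N) ^ 2 - (H : ℚ) ^ 2 + 1) / 8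
      ≤ (H : ℚ) * (min M N : ℕ) / 2 := by
  have hoddZ : Odd ((M : ℤ) + N + H) := by exact_mod_cast hodd
  rcases le_total M N with hMN | hMN
  · have ha : Odd ((H : ℤ) + M - N) := by
      obtain ⟨k, hk⟩ := hoddZ
      exact ⟨k - N, by linarith⟩
    have h1 : (1:ℤ) ≤ ((H : ℤ) + M - N) ^ 2 := odd_sq_ge_one _ ha
    have h1q : (1:ℚ) ≤ ((H : ℚ) + M - N) ^ 2 := by exact_mod_cast h1
    rw [min_eq_left hMN]
    nlinarith [h1q]
  · have ha : Odd ((H : ℤ) + N - M) := by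
      obtain ⟨k, hk⟩ := hoddZ
      exact ⟨k - M, by linarith⟩
    have h1 : (1:ℤ) ≤ ((H : ℤ) + N - M) ^ 2 := odd_sq_ge_one _ ha
    have h1q : (1:ℚ) ≤ ((H : ℚ) + N - M) ^ 2 := by exact_mod_cast h1
    rw [min_eq_right hMN]
    nlinarith [h1q]
end
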